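/- arXiv:1709.01049 — 6 statements merged into one kernel-verified Lean document; each statement's English description precedes it below -/
import Mathlib

section
/- For every ideal I of S and every n ≥ 1, the n-th p-differential power I^{⟨n⟩_p} := { f ∈ S : δ^a(f) ∈ I for all 0 ≤ a ≤ n−1 } is an ideal of S. -/
/-!
Write `φ x = x ^ p + p * δ x`. Cancelling `p` in `φ (x * y) = φ x * φ y` and in
`φ (x + y) = φ x + φ y` (where `p` divides the middle binomial coefficients) gives
`δ (x * y) = φ x * δ y + (y ^ (p - 1) * δ x) * y` and `δ (x + y) = δ x + δ y + d * x` for some `d`.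
Hence `δ (s * f)` and `δ (f + g)` are `S`-linear combinations of `f`, `δ f`, `δ g`, which for
`f, g` in the `(n + 1)`-st differential power lie in the `n`-th one, an ideal by induction.
-/

def IsPDerivation {S : Type*} [CommRing S] (p : ℕ) (δ : S → S) : Prop :=
  ∃ φ : S →+* S, ∀ x, φ x = x ^ p + p * δ x

def differentialPower {S : Type*} [CommRing S] (δ : S → S) (I : Ideal S) (n : ℕ) : Set S :=
  {f | ∀ a < n, δ^[a] f ∈ I}

section

variable {S : Type*} [CommRing S] {δ : S → S} {I : Ideal S} {n : ℕ} {f : S}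

theorem mem_differentialPower_succ :
    f ∈ differentialPower δ I (n + 1) ↔ f ∈ I ∧ δ f ∈ differentialPower δ I n := by
  simp only [differentialPower, Set.mem_ofPred_eq, Nat.forall_lt_succ_left,
    Function.iterate_zero_apply, Function.iterate_succ_apply]

theorem differentialPower_succ_subset :
    differentialPower δ I (n + 1) ⊆ differentialPower δ I n :=
  fun _ hf a ha => hf a (Nat.lt_succ_of_lt ha)

end

namespace IsPDerivation

variable {S : Type*} [CommRing S] {p : ℕ} {δ : S → S}

theorem map_mul (hδ : IsPDerivation p δ) (hreg : IsLeftRegular (p : S)) (x y : S) :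
    δ (x * y) = (x ^ p + p * δ x) * δ y + y ^ p * δ x := by
  obtain ⟨φ, hφ⟩ := hδ
  apply hreg
  have h := _root_.map_mul φ x y
  rw [hφ, hφ, hφ] at h
  linear_combination h

theorem exists_map_add (hδ : IsPDerivation p δ) (hreg : IsLeftRegular (p : S)) (hp : p.Prime)
    (x y : S) : ∃ d, δ (x + y) = δ x + δ y + d * x := by
  obtain ⟨φ, hφ⟩ := hδ
  obtain ⟨r, hr⟩ := exists_add_pow_prime_eq hp x y
  refine ⟨-(y * r), hreg ?_⟩
  have h := _root_.map_add φ x y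
  rw [hφ, hφ, hφ, hr] at h
  linear_combination h

theorem map_zero (hδ : IsPDerivation p δ) (hreg : IsLeftRegular (p : S)) (hp : p.Prime) :
    δ 0 = 0 := by
  obtain ⟨d, hd⟩ := hδ.exists_map_add hreg hp 0 0
  simpa using hd

variable {I : Ideal S}

theorem zero_mem_differentialPower (hδ : IsPDerivation p δ) (hreg : IsLeftRegular (p : S))
    (hp : p.Prime) (n : ℕ) : 0 ∈ differentialPower δ I n := fun a _ => by
  rw [Function.iterate_fixed (hδ.map_zero hreg hp)]
  exact I.zero_mem

theorem add_mem_and_mul_mem_differentialPower (hδ : IsPDerivation p δ)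
    (hreg : IsLeftRegular (p : S)) (hp : p.Prime) (n : ℕ) :
    (∀ f g, f ∈ differentialPower δ I n → g ∈ differentialPower δ I n →
        f + g ∈ differentialPower δ I n) ∧
      ∀ s f, f ∈ differentialPower δ I n → s * f ∈ differentialPower δ I n := by
  induction n with
  | zero => exact ⟨fun _ _ _ _ _ ha => absurd ha (Nat.not_lt_zero _),
      fun _ _ _ _ ha => absurd ha (Nat.not_lt_zero _)⟩
  | succ n ih =>
    obtain ⟨add_mem, mul_mem⟩ := ih
    refine ⟨fun f g hf hg => ?_, fun s f hf => ?_⟩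
    · rw [mem_differentialPower_succ] at hf hg ⊢
      obtain ⟨d, hd⟩ := hδ.exists_map_add hreg hp f g
      refine ⟨I.add_mem hf.1 hg.1, hd ▸ add_mem _ _ (add_mem _ _ hf.2 hg.2) (mul_mem _ _ ?_)⟩
      exact differentialPower_succ_subset (mem_differentialPower_succ.2 hf)
    · have hf' := differentialPower_succ_subset hf
      rw [mem_differentialPower_succ] at hf ⊢
      refine ⟨I.mul_mem_left s hf.1, hδ.map_mul hreg s f ▸ add_mem _ _ (mul_mem _ _ hf.2) ?_⟩
      rw [← Nat.sub_one_add_one hp.ne_zero, pow_succ, mul_right_comm]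
      exact mul_mem _ _ hf'

def differentialPowerIdeal (hδ : IsPDerivation p δ) (hreg : IsLeftRegular (p : S))
    (hp : p.Prime) (I : Ideal S) (n : ℕ) : Ideal S where
  carrier := differentialPower δ I n
  zero_mem' := hδ.zero_mem_differentialPower hreg hp n
  add_mem' := (hδ.add_mem_and_mul_mem_differentialPower hreg hp n).1 _ _
  smul_mem' := (hδ.add_mem_and_mul_mem_differentialPower hreg hp n).2

end IsPDerivation

theorem stmt_6_general (p : ℕ) (hp : p.Prime) (S : Type*) [CommRing S]
    (hpnzd : ∀ x : S, (p : S) * x = 0 → x = 0)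
    (δ : S → S) (hδ : ∃ φ : S →+* S, ∀ x : S, φ x = x ^ p + p * δ x)
    (I : Ideal S) (n : ℕ) :
    ∃ K : Ideal S, ∀ f : S, f ∈ K ↔ ∀ a < n, δ^[a] f ∈ I :=
  ⟨IsPDerivation.differentialPowerIdeal hδ (isLeftRegular_of_non_zero_divisor _ hpnzd) hp I n,
    fun _ => Iff.rfl⟩

/-- the n-th p-differential power { f | δ^a(f) ∈ I for all a ≤ n-1 }
is an ideal of S. -/
theorem stmt_6 (p : ℕ) (hp : p.Prime) (S : Type*) [CommRing S]
    (hpnzd : ∀ x : S, (p : S) * x = 0 → x = 0)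
    (δ : S → S) (hδ : ∃ φ : S →+* S, ∀ x : S, φ x = x ^ p + p * δ x)
    (I : Ideal S) (n : ℕ) (hn : 1 ≤ n) :
    ∃ K : Ideal S, ∀ f : S, f ∈ K ↔ ∀ a < n, δ^[a] f ∈ I :=
  stmt_6_general p hp S hpnzd δ hδ I n
end

section
/- If a is an ideal of S containing p, then for all s, t ∈ ℕ one has a^{⟨s⟩_p} · a^{⟨t⟩_p} ⊆ a^{⟨s+t⟩_p}, where a^{⟨n⟩_p} = { f ∈ S : δ^i(f) ∈ a for all 0 ≤ i ≤ n−1 }. -/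
open Finset

private def memI {S : Type*} [CommRing S] (δ : S → S) (a : Ideal S) (n : ℕ) (x : S) : Prop :=
  ∀ i < n, δ^[i] x ∈ a

private lemma memI_mono {S : Type*} [CommRing S] {δ : S → S} {a : Ideal S} {m n : ℕ} (h : m ≤ n)
    {x : S} (hx : memI δ a n x) : memI δ a m x :=
  fun i hi => hx i (lt_of_lt_of_le hi h)

private lemma memI_step {S : Type*} [CommRing S] {δ : S → S} {a : Ideal S} {n : ℕ} {x : S}
    (hx : memI δ a n x) : memI δ a (n - 1) (δ x) := by
  intro i hi
  rw [← Function.iterate_succ_apply]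
  exact hx (i + 1) (by omega)

private lemma memI_cons {S : Type*} [CommRing S] {δ : S → S} {a : Ideal S} {n : ℕ} {x : S}
    (h0 : x ∈ a) (hx : memI δ a n (δ x)) : memI δ a (n + 1) x := by
  intro i hi
  cases i with
  | zero => simpa using h0
  | succ j => rw [Function.iterate_succ_apply]; exact hx j (by omega)

private lemma memI_zero {S : Type*} [CommRing S] {p : ℕ} (hp : p.Prime)
    (hpnzd : ∀ x : S, (p : S) * x = 0 → x = 0)
    {δ : S → S} {φ : S →+* S} (hφ : ∀ x : S, φ x = x ^ p + p * δ x)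
    (a : Ideal S) (n : ℕ) : memI δ a n (0 : S) := by
  have h0 : δ (0 : S) = 0 := by
    apply hpnzd
    have := hφ (0 : S)
    rw [map_zero, zero_pow hp.pos.ne'] at this
    linear_combination -this
  intro i _
  rw [Function.iterate_fixed h0 i]
  exact a.zero_mem

private lemma delta_mul {S : Type*} [CommRing S] {p : ℕ}
    (hpnzd : ∀ x : S, (p : S) * x = 0 → x = 0)
    {δ : S → S} {φ : S →+* S} (hφ : ∀ x : S, φ x = x ^ p + p * δ x) (x y : S) :
    δ (x * y) = x ^ p * δ y + y ^ p * δ x + p * (δ x * δ y) := by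
  have h := φ.map_mul x y
  rw [hφ, hφ, hφ] at h
  have hz : (p : S) * (δ (x * y) - (x ^ p * δ y + y ^ p * δ x + p * (δ x * δ y))) = 0 := by
    linear_combination h
  exact sub_eq_zero.mp (hpnzd _ hz)

private lemma delta_add {S : Type*} [CommRing S] {p : ℕ} (hp : p.Prime)
    (hpnzd : ∀ x : S, (p : S) * x = 0 → x = 0)
    {δ : S → S} {φ : S →+* S} (hφ : ∀ x : S, φ x = x ^ p + p * δ x) (x y : S) :
    δ (x + y) = δ x + δ y -
      ∑ i ∈ Ioo 0 p, ((p.choose i / p : ℕ) : S) * (x ^ i * y ^ (p - i)) := by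
  have h := φ.map_add x y
  rw [hφ, hφ, hφ] at h
  have key : ((x + y) ^ p : S)
      = x ^ p + y ^ p + ∑ i ∈ Ioo 0 p, x ^ i * y ^ (p - i) * (p.choose i) := by
    rw [add_pow]
    have h1 : range (p + 1) = insert p (insert 0 (Ioo 0 p)) := by
      ext i
      simp only [Finset.mem_range, Finset.mem_insert, Finset.mem_Ioo]
      omega
    have hpm : p ∉ insert 0 (Ioo 0 p) := by
      have := hp.pos
      simp only [Finset.mem_insert, Finset.mem_Ioo]
      omega
    have h0m : (0 : ℕ) ∉ Ioo 0 p := by simp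
    rw [h1, Finset.sum_insert hpm, Finset.sum_insert h0m]
    simp only [Nat.sub_self, Nat.choose_self, Nat.choose_zero_right, pow_zero,
      Nat.sub_zero, Nat.cast_one]
    ring
  have pE : (p : S) * (∑ i ∈ Ioo 0 p, ((p.choose i / p : ℕ) : S) * (x ^ i * y ^ (p - i)))
      = ∑ i ∈ Ioo 0 p, x ^ i * y ^ (p - i) * (p.choose i) := by
    rw [Finset.mul_sum]
    apply Finset.sum_congr rfl
    intro i hi
    simp only [Finset.mem_Ioo] at hi
    have hd : p ∣ p.choose i := hp.dvd_choose_self (by omega) hi.2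
    have hmd : (p : ℕ) * (p.choose i / p) = p.choose i := Nat.mul_div_cancel' hd
    calc (p : S) * (((p.choose i / p : ℕ) : S) * (x ^ i * y ^ (p - i)))
        = ((p * (p.choose i / p) : ℕ) : S) * (x ^ i * y ^ (p - i)) := by push_cast; ring
      _ = x ^ i * y ^ (p - i) * (p.choose i) := by rw [hmd]; ring
  have hz : (p : S) * (δ (x + y) - (δ x + δ y -
      ∑ i ∈ Ioo 0 p, ((p.choose i / p : ℕ) : S) * (x ^ i * y ^ (p - i)))) = 0 := by
    linear_combination h - key + pE
  exact sub_eq_zero.mp (hpnzd _ hz)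

private lemma main_lemma {S : Type*} [CommRing S] {p : ℕ} (hp : p.Prime)
    (hpnzd : ∀ x : S, (p : S) * x = 0 → x = 0)
    {δ : S → S} {φ : S →+* S} (hφ : ∀ x : S, φ x = x ^ p + p * δ x)
    (a : Ideal S) (hpa : (p : S) ∈ a) :
    ∀ n : ℕ, (∀ x y : S, memI δ a n x → memI δ a n y → memI δ a n (x + y)) ∧
      (∀ s t : ℕ, s + t = n → ∀ x y : S, memI δ a s x → memI δ a t y → memI δ a n (x * y)) := by
  intro n
  induction n using Nat.strong_induction_on with
  | _ n ih =>
    match n with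
    | 0 =>
      exact ⟨fun _ _ _ _ i hi => absurd hi (by omega),
             fun _ _ _ _ _ _ _ i hi => absurd hi (by omega)⟩
    | (m + 1) =>
      have ihm := ih m (by omega)
      have hmemp : memI δ a 1 ((p : ℕ) : S) := by
        intro i hi
        have : i = 0 := by omega
        subst this
        simpa using hpa
      constructor
      · -- additivity
        intro x y hx hy
        have hxa : x ∈ a := by simpa using hx 0 (by omega)
        have hya : y ∈ a := by simpa using hy 0 (by omega)
        apply memI_cons (a.add_mem hxa hya)
        rw [delta_add hp hpnzd hφ x y]
        have hdx : memI δ a m (δ x) := by simpa using memI_step hx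
        have hdy : memI δ a m (δ y) := by simpa using memI_step hy
        have hS : memI δ a m
            (∑ i ∈ Ioo 0 p, ((p.choose i / p : ℕ) : S) * (x ^ i * y ^ (p - i))) := by
          apply Finset.sum_induction _ (memI δ a m) ihm.1 (memI_zero hp hpnzd hφ a m)
          intro i hi
          simp only [Finset.mem_Ioo] at hi
          have hr : ((p.choose i / p : ℕ) : S) * (x ^ i * y ^ (p - i))
              = (((p.choose i / p : ℕ) : S) * x ^ (i - 1) * y ^ (p - i)) * x := by
            have hxi : x ^ i = x ^ (i - 1) * x := by
              conv_lhs => rw [show i = (i - 1) + 1 by omega]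
              rw [pow_succ]
            rw [hxi]; ring
          rw [hr]
          exact ihm.2 0 m (Nat.zero_add m) _ x (fun j hj => absurd hj (by omega))
            (memI_mono (by omega) hx)
        have hneg : memI δ a m
            (-(∑ i ∈ Ioo 0 p, ((p.choose i / p : ℕ) : S) * (x ^ i * y ^ (p - i)))) := by
          rw [neg_eq_neg_one_mul]
          exact ihm.2 0 m (Nat.zero_add m) _ _ (fun j hj => absurd hj (by omega)) hS
        have hfin := ihm.1 _ _ (ihm.1 _ _ hdx hdy) hneg
        simpa [sub_eq_add_neg] using hfin
      · -- multiplicativity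
        intro s t hst x y hx hy
        have hxya : x * y ∈ a := by
          rcases Nat.eq_zero_or_pos s with hs | hs
          · have : y ∈ a := by simpa using hy 0 (by omega)
            exact a.mul_mem_left x this
          · have : x ∈ a := by simpa using hx 0 hs
            exact a.mul_mem_right y this
        apply memI_cons hxya
        rw [delta_mul hpnzd hφ x y]
        have hdx : memI δ a (s - 1) (δ x) := memI_step hx
        have hdy : memI δ a (t - 1) (δ y) := memI_step hy
        have hp1 : 1 ≤ p := hp.one_lt.le.trans' (by omega)
        -- term 1 : x ^ p * δ y
        have h1 : memI δ a m (x ^ p * δ y) := by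
          have hin : memI δ a (t - 1) (x ^ (p - 1) * δ y) :=
            (ih (t - 1) (by omega)).2 0 (t - 1) (Nat.zero_add _) _ _
              (fun j hj => absurd hj (by omega)) hdy
          have hr : x ^ p * δ y = x * (x ^ (p - 1) * δ y) := by
            conv_lhs => rw [show p = 1 + (p - 1) by omega, pow_add, pow_one]
            ring
          rw [hr]
          exact ihm.2 (m - (t - 1)) (t - 1) (by omega) _ _
            (memI_mono (by omega) hx) hin
        -- term 2 : y ^ p * δ x
        have h2 : memI δ a m (y ^ p * δ x) := by
          have hin : memI δ a (s - 1) (y ^ (p - 1) * δ x) :=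
            (ih (s - 1) (by omega)).2 0 (s - 1) (Nat.zero_add _) _ _
              (fun j hj => absurd hj (by omega)) hdx
          have hr : y ^ p * δ x = y * (y ^ (p - 1) * δ x) := by
            conv_lhs => rw [show p = 1 + (p - 1) by omega, pow_add, pow_one]
            ring
          rw [hr]
          exact ihm.2 (m - (s - 1)) (s - 1) (by omega) _ _
            (memI_mono (by omega) hy) hin
        -- term 3 : p * (δ x * δ y)
        have h3 : memI δ a m ((p : S) * (δ x * δ y)) := by
          have hin : memI δ a ((s - 1) + (t - 1)) (δ x * δ y) :=
            (ih ((s - 1) + (t - 1)) (by omega)).2 (s - 1) (t - 1) rfl _ _ hdx hdy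
          exact ihm.2 (m - ((s - 1) + (t - 1))) ((s - 1) + (t - 1)) (by omega) _ _
            (memI_mono (by omega) hmemp) hin
        exact ihm.1 _ _ (ihm.1 _ _ h1 h2) h3

/-- for an ideal a containing p, a^{⟨s⟩_p}·a^{⟨t⟩_p} ⊆ a^{⟨s+t⟩_p}. -/
theorem stmt_7 (p : ℕ) (hp : p.Prime) (S : Type*) [CommRing S]
    (hpnzd : ∀ x : S, (p : S) * x = 0 → x = 0)
    (δ : S → S) (hδ : ∃ φ : S →+* S, ∀ x : S, φ x = x ^ p + p * δ x)
    (a : Ideal S) (hpa : (p : S) ∈ a) (s t : ℕ) (f g : S)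
    (hf : ∀ i < s, δ^[i] f ∈ a) (hg : ∀ i < t, δ^[i] g ∈ a) :
    ∀ i < s + t, δ^[i] (f * g) ∈ a := by
  obtain ⟨φ, hφ⟩ := hδ
  exact (main_lemma hp hpnzd hφ a hpa (s + t)).2 s t rfl f g hf hg
end

section
/- If Q is a prime ideal of S and a is a Q-primary ideal containing p, then for every n ≥ 1 the p-differential power a^{⟨n⟩_p} = { f ∈ S : δ^i(f) ∈ a for all 0 ≤ i ≤ n−1 } is a Q-primary ideal. -/
/-- if a is Q-primary and p ∈ a, then a^{⟨n⟩_p} is a Q-primary ideal. -/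
theorem stmt_9 (p : ℕ) (hp : p.Prime) (S : Type*) [CommRing S]
    (hpnzd : ∀ x : S, (p : S) * x = 0 → x = 0)
    (δ : S → S) (hδ : ∃ φ : S →+* S, ∀ x : S, φ x = x ^ p + p * δ x)
    (Q a : Ideal S) (hQ : Q.IsPrime) (hprim : a.IsPrimary) (hrad : a.radical = Q)
    (hpa : (p : S) ∈ a) (n : ℕ) (hn : 1 ≤ n) :
    ∃ K : Ideal S, (∀ f : S, f ∈ K ↔ ∀ i < n, δ^[i] f ∈ a) ∧
      K.IsPrimary ∧ K.radical = Q := by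
  classical
  obtain ⟨φ, hφ⟩ := hδ
  have cancel : ∀ x y : S, (p : S) * x = (p : S) * y → x = y := by
    intro x y h
    have h0 : (p : S) * (x - y) = 0 := by rw [mul_sub, h, sub_self]
    exact sub_eq_zero.mp (hpnzd _ h0)
  -- product rule
  have hB : ∀ x y : S, δ (x * y) = x ^ p * δ y + y ^ p * δ x + p * (δ x * δ y) := by
    intro x y
    apply cancel
    have h1 := map_mul φ x y
    rw [hφ, hφ, hφ] at h1
    linear_combination h1
  -- additivity rule
  have hA : ∀ x y : S, ∃ m : S, δ (x + y) = δ x + δ y + x * y * m := by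
    intro x y
    refine ⟨-∑ k ∈ (Finset.range p).erase 0,
      ((p.choose k / p : ℕ) : S) * x ^ (k - 1) * y ^ (p - 1 - k), ?_⟩
    apply cancel
    have h1 := map_add φ x y
    rw [hφ, hφ, hφ] at h1
    have hbin : (x + y) ^ p = x ^ p + y ^ p +
        ∑ k ∈ (Finset.range p).erase 0, x ^ k * y ^ (p - k) * (p.choose k : S) := by
      rw [add_pow, Finset.sum_range_succ,
        ← Finset.add_sum_erase _ _ (Finset.mem_range.mpr hp.pos)]
      simp [hp.pos.ne']
      ring
    have hm : (p : S) * (x * y * (∑ k ∈ (Finset.range p).erase 0,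
        ((p.choose k / p : ℕ) : S) * x ^ (k - 1) * y ^ (p - 1 - k))) =
        ∑ k ∈ (Finset.range p).erase 0, x ^ k * y ^ (p - k) * (p.choose k : S) := by
      rw [Finset.mul_sum, Finset.mul_sum]
      apply Finset.sum_congr rfl
      intro k hk
      obtain ⟨hk0, hkr⟩ := Finset.mem_erase.mp hk
      have hkp : k < p := Finset.mem_range.mp hkr
      have h2 : ((p.choose k / p : ℕ) : S) * p = (p.choose k : S) := by
        rw [← Nat.cast_mul, Nat.div_mul_cancel (hp.dvd_choose_self hk0 hkp)]
      have e1 : x ^ k = x * x ^ (k - 1) := by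
        rw [← pow_succ']; congr 1; omega
      have e2 : y ^ (p - k) = y * y ^ (p - 1 - k) := by
        rw [← pow_succ']; congr 1; omega
      rw [e1, e2, ← h2]; ring
    linear_combination h1 - hbin + hm
  have hδ0 : δ 0 = 0 := by
    have h0 := map_zero φ
    rw [hφ] at h0
    apply hpnzd
    have : (0:S) ^ p = 0 := zero_pow hp.ne_zero
    linear_combination h0 - this
  -- a^(m+1) is mapped into a^m by δ
  have hstep : ∀ m : ℕ, ∀ f ∈ a ^ (m + 1), δ f ∈ a ^ m := by
    intro m
    induction m with
    | zero => intro f _; simp [Ideal.one_eq_top]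
    | succ m ih =>
      intro f hf
      rw [pow_succ] at hf
      refine (Submodule.mul_induction_on (C := fun f => f ∈ a ^ (m + 1) ∧ δ f ∈ a ^ (m + 1))
        hf ?_ ?_).2
      · intro x hx y hy
        refine ⟨Ideal.mul_mem_right _ _ hx, ?_⟩
        rw [hB]
        have h1 : x ^ p * δ y ∈ a ^ (m + 1) :=
          Ideal.mul_mem_right _ _ (Ideal.pow_mem_of_mem _ hx p hp.pos)
        have h2 : y ^ p * δ x ∈ a ^ (m + 1) := by
          have : y ^ p * δ x = y ^ (p - 1) * (y * δ x) := by
            rw [← pow_sub_one_mul hp.ne_zero y]; ring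
          rw [this, pow_succ']
          exact Ideal.mul_mem_left _ _ (Ideal.mul_mem_mul hy (ih x hx))
        have h3 : (p : S) * (δ x * δ y) ∈ a ^ (m + 1) := by
          have : (p : S) * (δ x * δ y) = ((p : S) * δ x) * δ y := by ring
          rw [this, pow_succ']
          exact Ideal.mul_mem_right _ _ (Ideal.mul_mem_mul hpa (ih x hx))
        exact Ideal.add_mem _ (Ideal.add_mem _ h1 h2) h3
      · intro u v hu hv
        refine ⟨Ideal.add_mem _ hu.1 hv.1, ?_⟩
        obtain ⟨m', hm'⟩ := hA u v
        rw [hm']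
        exact Ideal.add_mem _ (Ideal.add_mem _ hu.2 hv.2)
          (Ideal.mul_mem_right _ _ (Ideal.mul_mem_right _ _ hu.1))
  have hchain : ∀ i m : ℕ, ∀ f ∈ a ^ (m + i), δ^[i] f ∈ a ^ m := by
    intro i
    induction i with
    | zero => intro m f hf; simpa using hf
    | succ i ih =>
      intro m f hf
      rw [Function.iterate_succ_apply]
      apply ih
      apply hstep (m + i)
      rwa [show m + i + 1 = m + (i + 1) by omega]
  -- main induction
  induction n, hn using Nat.le_induction with
  | base =>
    refine ⟨a, ?_, hprim, hrad⟩
    intro f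
    constructor
    · intro hf i hi
      have : i = 0 := by omega
      subst this; simpa using hf
    · intro h; simpa using h 0 one_pos
  | succ n hn ih =>
    obtain ⟨K, hKmem, hKprim, hKrad⟩ := ih
    have hmk : ∀ f : S, f ∈ a → δ f ∈ K → f ∈ K := by
      intro f hfa hfd
      rw [hKmem]
      intro i hi
      cases i with
      | zero => simpa using hfa
      | succ i =>
        rw [Function.iterate_succ_apply]
        exact (hKmem _).1 hfd i (by omega)
    let K' : Ideal S :=
      { carrier := {f | f ∈ a ∧ δ f ∈ K}
        zero_mem' := ⟨a.zero_mem, by rw [hδ0]; exact K.zero_mem⟩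
        add_mem' := by
          rintro f g ⟨hfa, hfd⟩ ⟨hga, hgd⟩
          refine ⟨a.add_mem hfa hga, ?_⟩
          obtain ⟨m, hm⟩ := hA f g
          rw [hm]
          exact K.add_mem (K.add_mem hfd hgd)
            (Ideal.mul_mem_right _ _ (Ideal.mul_mem_right _ _ (hmk f hfa hfd)))
        smul_mem' := by
          rintro s f ⟨hfa, hfd⟩
          refine ⟨by simpa [smul_eq_mul] using a.mul_mem_left s hfa, ?_⟩
          have hE : δ (s • f) = s ^ p * δ f + f ^ p * δ s + p * (δ s * δ f) := by
            rw [smul_eq_mul]; exact hB s f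
          rw [hE]
          have h1 : s ^ p * δ f ∈ K := Ideal.mul_mem_left _ _ hfd
          have h2 : f ^ p * δ s ∈ K := by
            have : f ^ p * δ s = (f ^ (p - 1) * δ s) * f := by
              rw [← pow_sub_one_mul hp.ne_zero f]; ring
            rw [this]
            exact Ideal.mul_mem_left _ _ (hmk f hfa hfd)
          have h3 : (p : S) * (δ s * δ f) ∈ K := by
            have : (p : S) * (δ s * δ f) = ((p : S) * δ s) * δ f := by ring
            rw [this]
            exact Ideal.mul_mem_left _ _ hfd
          exact K.add_mem (K.add_mem h1 h2) h3 }
    have hK'mem : ∀ f : S, f ∈ K' ↔ f ∈ a ∧ δ f ∈ K := fun _ => Iff.rfl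
    have hK'iff : ∀ f : S, f ∈ K' ↔ ∀ i < n + 1, δ^[i] f ∈ a := by
      intro f
      rw [hK'mem]
      constructor
      · rintro ⟨hfa, hfd⟩ i hi
        cases i with
        | zero => simpa using hfa
        | succ i =>
          rw [Function.iterate_succ_apply]
          exact (hKmem _).1 hfd i (by omega)
      · intro h
        refine ⟨by simpa using h 0 (by omega), ?_⟩
        rw [hKmem]
        intro i hi
        rw [← Function.iterate_succ_apply]
        exact h (i + 1) (by omega)
    have hK'a : K' ≤ a := fun f hf => ((hK'mem f).1 hf).1
    have hK'rad : K'.radical = Q := by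
      apply le_antisymm
      · exact (Ideal.radical_mono hK'a).trans_eq hrad
      · intro q hq
        rw [← hrad] at hq
        obtain ⟨k, hk⟩ := Ideal.mem_radical_iff.mp hq
        rw [Ideal.mem_radical_iff]
        refine ⟨k * (n + 1), ?_⟩
        rw [hK'iff]
        intro i hi
        rw [pow_mul]
        have hmem : (q ^ k) ^ (n + 1) ∈ a ^ ((n + 1 - i) + i) := by
          rw [show n + 1 - i + i = n + 1 by omega]
          exact Ideal.pow_mem_pow hk (n + 1)
        exact Ideal.pow_le_self (by omega) (hchain i (n + 1 - i) _ hmem)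
    have hpQ : (p : S) ∈ Q := hrad ▸ Ideal.le_radical hpa
    have hφQ : ∀ y : S, y ∉ Q → φ y ∉ Q := by
      intro y hy hc
      rw [hφ] at hc
      have hyp : y ^ p ∈ Q := by
        have := Q.sub_mem hc (Ideal.mul_mem_right (δ y) _ hpQ)
        simpa using this
      exact hy (hQ.mem_of_pow_mem _ hyp)
    have hK'prim : K'.IsPrimary := by
      rw [Ideal.isPrimary_iff]
      constructor
      · intro h
        apply (Ideal.isPrimary_iff.mp hprim).1
        rw [eq_top_iff, ← h]
        exact hK'a
      · intro x y hxy
        by_cases hy : y ∈ Q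
        · right; rw [hK'rad]; exact hy
        · left
          obtain ⟨hxya, hxyd⟩ := (hK'mem _).1 hxy
          have hxa : x ∈ a := by
            rcases (Ideal.isPrimary_iff.mp hprim).2 hxya with h | h
            · exact h
            · exact absurd (hrad ▸ h) hy
          have hxK : x ∈ K := by
            have hxyK : x * y ∈ K := hmk _ hxya hxyd
            rcases (Ideal.isPrimary_iff.mp hKprim).2 hxyK with h | h
            · exact h
            · exact absurd (hKrad ▸ h) hy
          have key : δ x * φ y ∈ K := by
            have e : δ (x * y) = x ^ p * δ y + δ x * φ y := by
              rw [hB, hφ]; ring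
            have h1 : x ^ p * δ y ∈ K := by
              have : x ^ p * δ y = (x ^ (p - 1) * δ y) * x := by
                rw [← pow_sub_one_mul hp.ne_zero x]; ring
              rw [this]
              exact Ideal.mul_mem_left _ _ hxK
            have h2 := K.sub_mem hxyd h1
            rw [e, add_sub_cancel_left] at h2
            exact h2
          have hδxK : δ x ∈ K := by
            rcases (Ideal.isPrimary_iff.mp hKprim).2 key with h | h
            · exact h
            · exact absurd (hKrad ▸ h) (hφQ y hy)
          exact (hK'mem x).2 ⟨hxa, hδxK⟩
    exact ⟨K', hK'iff, hK'prim, hK'rad⟩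
end

section
/- If Q is a prime ideal of S and a is a Q-primary ideal containing p, then the n-th symbolic power a^{(n)} (the contraction of a^n S_Q to S) is contained in a^{⟨n⟩_p} = { f ∈ S : δ^i(f) ∈ a for all 0 ≤ i ≤ n−1 }. -/
/-!
The Frobenius lift `φ x = x ^ p + p * δ x` is a ring map, which gives the product rule
`δ (x * y) = x ^ p * δ y + y ^ p * δ x + p * δ x * δ y` and additivity of `δ` up to a multiple
of `x * y`. Since `p ∈ a`, these show that `δ` maps `a ^ (k + 1)` into `a ^ k`.
If `m ∉ Q` and `m * h ∈ a ^ (k + 1)`, then `m ^ p * φ m * δ h = m ^ p * δ (m * h) - (m * h) ^ p * δ m`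
lies in `a ^ k`, and `m ^ p * φ m ∉ Q` because `φ m ≡ m ^ p` modulo `p ∈ Q`. Starting from
`s * f ∈ a ^ n` with `s ∉ Q`, after `i < n` steps some multiplier outside `Q = √a` takes
`δ^[i] f` into `a ^ (n - i) ⊆ a`, and since `a` is primary the multiplier can be dropped.
-/

open Ideal

section PDerivation

variable {S : Type*} [CommRing S] {p : ℕ} {δ : S → S} {φ : S →+* S}

theorem pDerivation_mul (hreg : IsLeftRegular (p : S)) (hφ : ∀ x, φ x = x ^ p + p * δ x)
    (x y : S) : δ (x * y) = x ^ p * δ y + y ^ p * δ x + p * δ x * δ y := by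
  apply hreg
  have h := map_mul φ x y
  rw [hφ, hφ, hφ] at h
  linear_combination h

theorem exists_pDerivation_add (hp : p.Prime) (hreg : IsLeftRegular (p : S))
    (hφ : ∀ x, φ x = x ^ p + p * δ x) (x y : S) :
    ∃ r, δ (x + y) = δ x + δ y - x * y * r := by
  obtain ⟨r, hr⟩ := exists_add_pow_prime_eq hp x y
  refine ⟨r, hreg ?_⟩
  have h := map_add φ x y
  rw [hφ, hφ, hφ] at h
  linear_combination h - hr

theorem pDerivation_mem_pow_of_mem_pow_succ (hp : p.Prime) (hreg : IsLeftRegular (p : S))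
    (hφ : ∀ x, φ x = x ^ p + p * δ x) {a : Ideal S} (hpa : (p : S) ∈ a) (k : ℕ) :
    ∀ {x : S}, x ∈ a ^ (k + 1) → δ x ∈ a ^ k := by
  induction k with
  | zero => simp
  | succ k ih =>
    intro x hx
    rw [pow_succ'] at hx
    induction hx using Submodule.mul_induction_on' with
    | mem_mul_mem r hr t ht =>
      have hδt : δ t ∈ a ^ k := ih ht
      rw [pDerivation_mul hreg hφ]
      refine add_mem (add_mem ?_ ?_) ?_
      · rw [pow_succ']
        exact mul_mem_mul (pow_mem_of_mem a hr p hp.pos) hδt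
      · exact mul_mem_right _ _ (pow_mem_of_mem _ ht p hp.pos)
      · rw [mul_assoc, pow_succ']
        exact mul_mem_mul hpa (mul_mem_left _ _ hδt)
    | add u hu v hv hδu hδv =>
      obtain ⟨r, hr⟩ := exists_pDerivation_add hp hreg hφ u v
      rw [hr]
      exact sub_mem (add_mem hδu hδv) (mul_mem_right _ _ (mul_mem_right _ _ (mul_le_right hu)))

theorem pow_mul_map_mul_pDerivation_mem_pow (hp : p.Prime) (hreg : IsLeftRegular (p : S))
    (hφ : ∀ x, φ x = x ^ p + p * δ x) {a : Ideal S} (hpa : (p : S) ∈ a) {k : ℕ} {m h : S}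
    (hmh : m * h ∈ a ^ (k + 1)) : m ^ p * φ m * δ h ∈ a ^ k := by
  have key : m ^ p * φ m * δ h = m ^ p * δ (m * h) - (m * h) ^ p * δ m := by
    rw [hφ, pDerivation_mul hreg hφ]
    ring
  rw [key]
  refine sub_mem (mul_mem_left _ _ (pDerivation_mem_pow_of_mem_pow_succ hp hreg hφ hpa k hmh)) ?_
  exact mul_mem_right _ _ (pow_mem_of_mem _ (pow_le_pow_right (Nat.le_succ k) hmh) p hp.pos)

theorem map_notMem_of_notMem (hφ : ∀ x, φ x = x ^ p + p * δ x) {Q : Ideal S}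
    [Q.IsPrime] (hpQ : (p : S) ∈ Q) {m : S} (hm : m ∉ Q) : φ m ∉ Q := by
  intro hφm
  have hmp : m ^ p ∈ Q := by
    simpa [hφ] using sub_mem hφm (mul_mem_right (δ m) Q hpQ)
  exact Q.primeCompl.pow_mem hm p hmp

theorem exists_notMem_mul_iterate_mem_pow (hp : p.Prime) (hreg : IsLeftRegular (p : S))
    (hφ : ∀ x, φ x = x ^ p + p * δ x) {Q a : Ideal S} [Q.IsPrime] (haQ : a ≤ Q)
    (hpa : (p : S) ∈ a) {n : ℕ} {s f : S} (hs : s ∉ Q) (hsf : s * f ∈ a ^ n) (j : ℕ) :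
    ∃ m ∉ Q, m * δ^[j] f ∈ a ^ (n - j) := by
  induction j with
  | zero => exact ⟨s, hs, hsf⟩
  | succ j ih =>
    obtain ⟨m, hm, hmf⟩ := ih
    have hmQ : m ^ p * φ m ∉ Q :=
      Q.primeCompl.mul_mem (Q.primeCompl.pow_mem hm p) (map_notMem_of_notMem hφ (haQ hpa) hm)
    refine ⟨m ^ p * φ m, hmQ, ?_⟩
    rw [Function.iterate_succ_apply', Nat.sub_succ]
    rcases hk : n - j with _ | k
    · simp
    · rw [hk] at hmf
      exact pow_mul_map_mul_pDerivation_mem_pow hp hreg hφ hpa hmf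

end PDerivation

theorem stmt_10_general (p : ℕ) (hp : p.Prime) (S : Type*) [CommRing S]
    (hpnzd : ∀ x : S, (p : S) * x = 0 → x = 0)
    (δ : S → S) (hδ : ∃ φ : S →+* S, ∀ x : S, φ x = x ^ p + p * δ x)
    (Q a : Ideal S) [hQ : Q.IsPrime] (hprim : a.IsPrimary) (hrad : a.radical = Q)
    (hpa : (p : S) ∈ a) (n : ℕ) :
    ∀ f ∈ Ideal.comap (algebraMap S (Localization Q.primeCompl))
        (Ideal.map (algebraMap S (Localization Q.primeCompl)) (a ^ n)),
      ∀ i < n, δ^[i] f ∈ a := by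
  obtain ⟨φ, hφ⟩ := hδ
  have hreg : IsLeftRegular (p : S) := isLeftRegular_iff_right_eq_zero_of_mul.mpr hpnzd
  intro f hf i hi
  obtain ⟨s, hs, hsf⟩ := (IsLocalization.algebraMap_mem_map_algebraMap_iff Q.primeCompl _ _ _).mp hf
  obtain ⟨m, hm, hmf⟩ :=
    exists_notMem_mul_iterate_mem_pow hp hreg hφ (hrad ▸ le_radical) hpa hs hsf i
  have hma : δ^[i] f * m ∈ a := pow_le_self (by omega) (mul_comm m (δ^[i] f) ▸ hmf)
  exact ((isPrimary_iff.mp hprim).2 hma).resolve_right (hrad ▸ hm)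

/-- if a is Q-primary with p ∈ a, then the symbolic power a^{(n)}
(contraction of a^n S_Q) is contained in a^{⟨n⟩_p}. -/
theorem stmt_10 (p : ℕ) (hp : p.Prime) (S : Type*) [CommRing S]
    (hpnzd : ∀ x : S, (p : S) * x = 0 → x = 0)
    (δ : S → S) (hδ : ∃ φ : S →+* S, ∀ x : S, φ x = x ^ p + p * δ x)
    (Q a : Ideal S) [hQ : Q.IsPrime] (hprim : a.IsPrimary) (hrad : a.radical = Q)
    (hpa : (p : S) ∈ a) (n : ℕ) (hn : 1 ≤ n) :
    ∀ f ∈ Ideal.comap (algebraMap S (Localization Q.primeCompl))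
        (Ideal.map (algebraMap S (Localization Q.primeCompl)) (a ^ n)),
      ∀ i < n, δ^[i] f ∈ a :=
  stmt_10_general p hp S hpnzd δ hδ Q a (hQ := hQ) hprim hrad hpa n
end

section
/- If Q is a prime ideal of S and a is a Q-primary ideal, then the differential power a^{⟨n⟩_B} = { f ∈ S : ∂(f) ∈ a for all ∂ ∈ D^{n−1}_{S|B} } is Q-primary for every n ≥ 1, and consequently the symbolic power a^{(n)} is contained in a^{⟨n⟩_B}. -/
/-- The B-linear differential operators on S of order at most n, defined inductively. -/
def DiffOp (B S : Type*) [CommRing B] [CommRing S] [Algebra B S] : ℕ → Set (S →ₗ[B] S)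
  | 0 => {δ | ∃ s : S, δ = LinearMap.mulLeft B s}
  | n + 1 => {δ | ∀ s : S,
      δ ∘ₗ LinearMap.mulLeft B s - LinearMap.mulLeft B s ∘ₗ δ ∈ DiffOp B S n}

section Aux

variable {B S : Type*} [CommRing B] [CommRing S] [Algebra B S]

lemma diffop_mul_decomp {m : ℕ} {d : S →ₗ[B] S} (hd : d ∈ DiffOp B S (m + 1)) (s x : S) :
    d (s * x) = s * d x
      + (d ∘ₗ LinearMap.mulLeft B s - LinearMap.mulLeft B s ∘ₗ d) x := by
  simp [LinearMap.sub_apply, LinearMap.comp_apply, LinearMap.mulLeft_apply]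

lemma diffop_smul (a : Ideal S) {n : ℕ} {x : S}
    (hx : ∀ m < n, ∀ d ∈ DiffOp B S m, d x ∈ a) (c : S) :
    ∀ m < n, ∀ d ∈ DiffOp B S m, d (c * x) ∈ a := by
  intro m
  match m with
  | 0 =>
    rintro hm d ⟨s, rfl⟩
    have := hx 0 hm (LinearMap.mulLeft B (s * c)) ⟨s * c, rfl⟩
    simpa [LinearMap.mulLeft_apply, mul_assoc] using this
  | m + 1 =>
    intro hm d hd
    rw [diffop_mul_decomp hd c x]
    exact a.add_mem (a.mul_mem_left _ (hx _ hm d hd)) (hx m (by omega) _ (hd c))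

lemma diffop_pow (a : Ideal S) : ∀ m, ∀ d ∈ DiffOp B S m, ∀ f ∈ a ^ (m + 1), d f ∈ a := by
  intro m
  induction m with
  | zero =>
    rintro d ⟨s, rfl⟩ f hf
    rw [pow_one] at hf
    exact a.mul_mem_left s hf
  | succ m ih =>
    intro d hd f hf
    rw [pow_succ] at hf
    refine Submodule.mul_induction_on hf ?_ ?_
    · intro i hi j hj
      have h : d (i * j) = j * d i
          + (d ∘ₗ LinearMap.mulLeft B j - LinearMap.mulLeft B j ∘ₗ d) i := by
        rw [mul_comm]; exact diffop_mul_decomp hd j i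
      rw [h]
      exact a.add_mem (a.mul_mem_right _ hj) (ih _ (hd j) i hi)
    · intro u v hu hv
      rw [map_add]; exact a.add_mem hu hv

lemma diffop_descent {a : Ideal S} (hprim : a.IsPrimary) {x y : S} (hy : y ∉ a.radical)
    {n : ℕ} (hxy : ∀ m < n, ∀ d ∈ DiffOp B S m, d (x * y) ∈ a) :
    ∀ m < n, ∀ d ∈ DiffOp B S m, d x ∈ a := by
  have hp := (Ideal.isPrimary_iff).mp hprim
  intro m
  induction m with
  | zero =>
    rintro hm d ⟨s, rfl⟩
    have h1 : (s * x) * y ∈ a := by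
      have := hxy 0 hm (LinearMap.mulLeft B s) ⟨s, rfl⟩
      simpa [LinearMap.mulLeft_apply, mul_assoc] using this
    exact (hp.2 h1).resolve_right hy
  | succ m ih =>
    intro hm d hd
    have hδ : (d ∘ₗ LinearMap.mulLeft B y - LinearMap.mulLeft B y ∘ₗ d) x ∈ a :=
      ih (by omega) _ (hd y)
    have h1 : d x * y ∈ a := by
      have h2 := hxy (m + 1) hm d hd
      rw [mul_comm x y] at h2
      have h3 : d x * y = d (y * x)
          - (d ∘ₗ LinearMap.mulLeft B y - LinearMap.mulLeft B y ∘ₗ d) x := by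
        rw [diffop_mul_decomp hd y x]; ring
      rw [h3]
      exact a.sub_mem h2 hδ
    exact (hp.2 h1).resolve_right hy

end Aux

/-- if a is Q-primary, then the differential power a^{⟨n⟩_B} is a
Q-primary ideal, and the symbolic power a^{(n)} (contraction of a^n S_Q)
is contained in it. -/
theorem stmt_15 (B S : Type*) [CommRing B] [CommRing S] [Algebra B S]
    (Q a : Ideal S) [hQ : Q.IsPrime] (hprim : a.IsPrimary) (hrad : a.radical = Q)
    (n : ℕ) (hn : 1 ≤ n) :
    ∃ K : Ideal S, (∀ f : S, f ∈ K ↔ ∀ m < n, ∀ d ∈ DiffOp B S m, d f ∈ a) ∧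
      K.IsPrimary ∧ K.radical = Q ∧
      Ideal.comap (algebraMap S (Localization Q.primeCompl))
        (Ideal.map (algebraMap S (Localization Q.primeCompl)) (a ^ n)) ≤ K := by
  set K : Ideal S :=
    { carrier := {f | ∀ m < n, ∀ d ∈ DiffOp B S m, d f ∈ a}
      add_mem' := fun hx hy m hm d hd => by
        rw [map_add]; exact a.add_mem (hx m hm d hd) (hy m hm d hd)
      zero_mem' := fun m hm d hd => by rw [map_zero]; exact a.zero_mem
      smul_mem' := fun c x hx => by
        simpa [smul_eq_mul] using diffop_smul a hx c } with hK
  have memK : ∀ f : S, f ∈ K ↔ ∀ m < n, ∀ d ∈ DiffOp B S m, d f ∈ a := fun f => Iff.rfl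
  have hp := (Ideal.isPrimary_iff).mp hprim
  -- K ≤ a
  have hKa : K ≤ a := by
    intro f hf
    have := hf 0 (by omega) (LinearMap.mulLeft B 1) ⟨1, rfl⟩
    simpa using this
  -- a ^ n ≤ K
  have hpowK : a ^ n ≤ K := by
    intro g hg m hm d hd
    exact diffop_pow a m d hd g (Ideal.pow_le_pow_right (by omega) hg)
  -- radical
  have hKrad : K.radical = Q := by
    apply le_antisymm
    · calc K.radical ≤ a.radical := Ideal.radical_mono hKa
        _ = Q := hrad
    · intro q hq
      rw [← hrad] at hq
      obtain ⟨e, he⟩ := hq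
      refine ⟨e * n, ?_⟩
      have : q ^ (e * n) ∈ a ^ n := by
        rw [pow_mul]
        exact Ideal.pow_mem_pow he n
      exact hpowK this
  -- primary
  have hKprim : K.IsPrimary := by
    rw [Ideal.isPrimary_iff]
    constructor
    · intro h
      apply hp.1
      rw [Ideal.eq_top_iff_one] at h ⊢
      exact hKa h
    · intro x y hxy
      by_cases hy : y ∈ K.radical
      · exact Or.inr hy
      · refine Or.inl ?_
        have hy' : y ∉ a.radical := by rwa [hrad, ← hKrad]
        exact diffop_descent hprim hy' hxy
  refine ⟨K, memK, hKprim, hKrad, ?_⟩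
  intro f hf
  rw [Ideal.mem_comap,
    IsLocalization.mem_map_algebraMap_iff Q.primeCompl (Localization Q.primeCompl)] at hf
  obtain ⟨⟨⟨v, hv⟩, u⟩, huv⟩ := hf
  rw [← map_mul] at huv
  obtain ⟨c, hc⟩ := (IsLocalization.eq_iff_exists Q.primeCompl (Localization Q.primeCompl)).mp huv
  have hmem : (↑c * ↑u) * f ∈ K := by
    apply hpowK
    have : (↑c * ↑u : S) * f = ↑c * v := by rw [← hc]; ring
    rw [this]
    exact Ideal.mul_mem_left _ _ hv
  have hw : (↑c * ↑u : S) ∉ K.radical := by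
    rw [hKrad]
    exact (c * u).2
  have hKp := (Ideal.isPrimary_iff).mp hKprim
  rw [mul_comm] at hmem
  exact (hKp.2 hmem).resolve_right hw
end

section
/- Let K = 𝔽_p(t), R = K[x], and Q = (x^p − t). Then every K-linear derivation d of R satisfies d(x^p − t) = 0 ∈ Q, so Q^{⟨2⟩_K} = Q (the second differential power equals Q), while Q^{(2)} = Q² ≠ Q; hence the Zariski–Nagata theorem fails without the separability hypothesis. -/
/-!
In characteristic `p` every derivation kills `p`-th powers and constants, hence `x ^ p - t`.
An operator of order at most one is multiplication by an element plus a derivation, so it maps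
the principal ideal `(x ^ p - t)` into itself and `Q^⟨2⟩ = Q`. On the other hand `Q` is maximal,
so `Q ^ 2` is `Q`-primary and coincides with the symbolic square, and `Q ^ 2 ≠ Q` by Nakayama.
-/

theorem Derivation.map_pow_char {B S M : Type*} [CommRing B] [CommRing S] [Algebra B S]
    [AddCommGroup M] [Module B M] [Module S M] (p : ℕ) [CharP S p] (D : Derivation B S M)
    (a : S) : D (a ^ p) = 0 := by
  rw [D.leibniz_pow, ← Nat.cast_smul_eq_nsmul S, CharP.cast_eq_zero, zero_smul]

theorem Derivation.map_pow_char_sub_algebraMap {B S M : Type*} [CommRing B] [CommRing S]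
    [Algebra B S] [AddCommGroup M] [Module B M] [Module S M] (p : ℕ) [CharP S p]
    (D : Derivation B S M) (a : S) (b : B) : D (a ^ p - algebraMap B S b) = 0 := by
  rw [map_sub, D.map_pow_char p, D.map_algebraMap, sub_zero]

namespace DiffOp

variable {B S : Type*} [CommRing B] [CommRing S] [Algebra B S]

theorem map_mul_of_mem_one {d : S →ₗ[B] S} (hd : d ∈ DiffOp B S 1) (s x : S) :
    d (s * x) = s * d x + (d s - s * d 1) * x := by
  obtain ⟨c, hc⟩ := hd s
  have hx := DFunLike.congr_fun hc x
  have h1 := DFunLike.congr_fun hc 1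
  simp only [LinearMap.sub_apply, LinearMap.comp_apply, LinearMap.mulLeft_apply, mul_one] at hx h1
  linear_combination hx - x * h1

theorem exists_derivation_of_mem_one {d : S →ₗ[B] S} (hd : d ∈ DiffOp B S 1) :
    ∃ D : Derivation B S S, ∀ x, d x = d 1 * x + D x := by
  refine ⟨Derivation.mk' (d - LinearMap.mulLeft B (d 1)) fun a b => ?_, fun x => ?_⟩
  · simp only [LinearMap.sub_apply, LinearMap.mulLeft_apply, smul_eq_mul, map_mul_of_mem_one hd]
    ring
  · simp

theorem setOf_forall_lt_two_map_mem_span_singleton_eq {q : S}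
    (hq : ∀ D : Derivation B S S, D q = 0) :
    {f : S | ∀ m < 2, ∀ d ∈ DiffOp B S m, d f ∈ Ideal.span {q}} = Ideal.span {q} := by
  ext f
  refine ⟨fun h => by simpa using h 0 two_pos (LinearMap.mulLeft B 1) ⟨1, rfl⟩,
    fun hf m hm d hd => ?_⟩
  obtain ⟨g, rfl⟩ := Ideal.mem_span_singleton'.mp hf
  interval_cases m
  · obtain ⟨s, rfl⟩ := hd
    exact Ideal.mul_mem_left _ _ hf
  · obtain ⟨D, hD⟩ := exists_derivation_of_mem_one hd
    rw [hD, D.leibniz, hq, smul_zero, zero_add, smul_eq_mul]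
    exact Ideal.add_mem _ (Ideal.mul_mem_left _ _ hf)
      (Ideal.mul_mem_right _ _ (Ideal.mem_span_singleton_self q))

end DiffOp

theorem Ideal.IsMaximal.comap_map_localization_pow {R : Type*} [CommRing R] {M : Ideal R}
    (hM : M.IsMaximal) (n : ℕ) :
    Ideal.comap (algebraMap R (Localization M.primeCompl))
      (Ideal.map (algebraMap R (Localization M.primeCompl)) (M ^ n)) = M ^ n := by
  rcases Nat.eq_zero_or_pos n with rfl | hn
  · simp [Ideal.map_top]
  refine IsLocalization.under_map_of_isPrimary_disjoint M.primeCompl _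
    (Ideal.isPrimary_of_isMaximal_radical ?_) ?_
  · rwa [Ideal.radical_pow _ hn.ne', hM.isPrime.radical]
  · exact Set.disjoint_compl_left_iff_subset.mpr (Ideal.pow_le_self hn.ne')

theorem Ideal.sq_ne_self {R : Type*} [CommRing R] [IsDomain R] [IsNoetherianRing R]
    {I : Ideal R} (h0 : I ≠ ⊥) (h1 : I ≠ ⊤) : I ^ 2 ≠ I := fun h => by
  have := (I.isIdempotentElem_iff_eq_bot_or_top (IsNoetherian.noetherian I)).mp
    (by rw [IsIdempotentElem, ← sq, h])
  tauto

open Polynomial in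
/-- for K = 𝔽_p(t), R = K[x], Q = (x^p - t): every K-linear derivation
kills x^p - t, the second differential power Q^{⟨2⟩_K} equals Q, while
Q^{(2)} = Q² ≠ Q. -/
theorem stmt_18 (p : ℕ) [Fact p.Prime]
    (Q : Ideal (Polynomial (RatFunc (ZMod p))))
    (hQdef : Q = Ideal.span {(Polynomial.X : Polynomial (RatFunc (ZMod p))) ^ p -
      Polynomial.C RatFunc.X})
    [hQ : Q.IsPrime] :
    (∀ d : Derivation (RatFunc (ZMod p)) (Polynomial (RatFunc (ZMod p)))
        (Polynomial (RatFunc (ZMod p))),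
      d ((Polynomial.X : Polynomial (RatFunc (ZMod p))) ^ p -
        Polynomial.C RatFunc.X) = 0) ∧
    ({f : Polynomial (RatFunc (ZMod p)) |
        ∀ m < 2, ∀ d ∈ DiffOp (RatFunc (ZMod p)) (Polynomial (RatFunc (ZMod p))) m,
          d f ∈ Q} = (Q : Set (Polynomial (RatFunc (ZMod p))))) ∧
    (Ideal.comap (algebraMap (Polynomial (RatFunc (ZMod p))) (Localization Q.primeCompl))
      (Ideal.map (algebraMap (Polynomial (RatFunc (ZMod p))) (Localization Q.primeCompl))
        (Q ^ 2)) = Q ^ 2) ∧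
    Q ^ 2 ≠ Q := by
  subst hQdef
  set q : (RatFunc (ZMod p))[X] := X ^ p - C RatFunc.X
  have hq : ∀ D : Derivation (RatFunc (ZMod p)) (RatFunc (ZMod p))[X] (RatFunc (ZMod p))[X],
      D q = 0 :=
    fun D => D.map_pow_char_sub_algebraMap p X RatFunc.X
  have hQ0 : Ideal.span {q} ≠ ⊥ := by
    simpa [Ideal.span_singleton_eq_bot] using (monic_X_pow_sub_C _ (NeZero.ne p)).ne_zero
  exact ⟨hq, DiffOp.setOf_forall_lt_two_map_mem_span_singleton_eq hq,
    (IsPrime.to_maximal_ideal hQ0).comap_map_localization_pow 2, Ideal.sq_ne_self hQ0 hQ.ne_top⟩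
end
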